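/- arXiv:1411.0611 — 2 statements merged into one kernel-verified Lean document; each statement's English description precedes it below -/
import Mathlib

section
/- For every h > 0, one has 1 + (k_r/D)·G²(h) > 0 if and only if h > h*₂(k_r) := √π·σ·exp((3 + 2π·C₂)/4 − 2π·D/k_r). Consequently the 2D mesoscopic reaction rate ρ²(k_r,h) is positive precisely for h > h*₂(k_r), and G²(h*₂(k_r)) = −D/k_r. -/
/-- The constant `C₂ ≈ 0.1951` from the 2D mesoscopic rate expression. -/
noncomputable def C2 : ℝ := 0.1951

/-- `G²(h) = 1/(2π)·log(h/(√π·σ)) − (1/4)·(3/(2π)+C₂)`. -/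
noncomputable def G2 (σ h : ℝ) : ℝ :=
  (1 / (2 * Real.pi)) * Real.log (h / (Real.sqrt Real.pi * σ))
    - (1 / 4) * (3 / (2 * Real.pi) + C2)

/-- The 2D mesoscopic association rate `ρ²(k_r,h) = (k_r/h²)·(1+(k_r/D)·G²(h))⁻¹`. -/
noncomputable def rho2 (σ D kr h : ℝ) : ℝ :=
  (kr / h ^ 2) * (1 + (kr / D) * G2 σ h)⁻¹

/-- The 2D critical voxel size `h*₂(k_r) = √π·σ·exp((3+2π·C₂)/4 − 2π·D/k_r)`. -/
noncomputable def hstar2 (σ D kr : ℝ) : ℝ :=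
  Real.sqrt Real.pi * σ * Real.exp ((3 + 2 * Real.pi * C2) / 4 - 2 * Real.pi * D / kr)

theorem stmt_0 (σ D kr : ℝ) (hσ : 0 < σ) (hD : 0 < D) (hkr : 0 < kr) :
    (∀ h : ℝ, 0 < h → (0 < 1 + (kr / D) * G2 σ h ↔ hstar2 σ D kr < h)) ∧
    (∀ h : ℝ, 0 < h → (0 < rho2 σ D kr h ↔ hstar2 σ D kr < h)) ∧
    G2 σ (hstar2 σ D kr) = -(D / kr) := by
  have hπ := Real.pi_pos
  have hs : 0 < Real.sqrt Real.pi * σ := mul_pos (Real.sqrt_pos.2 hπ) hσ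
  have hstar_pos : 0 < hstar2 σ D kr := mul_pos hs (Real.exp_pos _)
  have hG : G2 σ (hstar2 σ D kr) = -(D / kr) := by
    unfold G2 hstar2
    rw [mul_div_cancel_left₀ _ hs.ne', Real.log_exp]
    field_simp
    ring
  have key : ∀ g : ℝ, (0 < 1 + (kr / D) * g ↔ -(D / kr) < g) := by
    intro g
    have hr : 0 < kr / D := div_pos hkr hD
    rw [show (1 : ℝ) + (kr / D) * g = (kr / D) * (g - -(D / kr)) by
      field_simp; ring]
    constructor
    · intro H
      nlinarith
    · intro H
      exact mul_pos hr (by linarith)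
  have mono : ∀ h : ℝ, 0 < h → (-(D / kr) < G2 σ h ↔ hstar2 σ D kr < h) := by
    intro h hh
    rw [← hG]
    unfold G2
    have hc : (0 : ℝ) < 1 / (2 * Real.pi) := by positivity
    constructor
    · intro H
      have hlog : Real.log (hstar2 σ D kr / (Real.sqrt Real.pi * σ)) <
          Real.log (h / (Real.sqrt Real.pi * σ)) := by
        by_contra hcon
        push_neg at hcon
        nlinarith
      have := (Real.log_lt_log_iff (div_pos hstar_pos hs) (div_pos hh hs)).mp hlog
      exact (div_lt_div_iff_of_pos_right hs).mp this
    · intro H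
      have hlog : Real.log (hstar2 σ D kr / (Real.sqrt Real.pi * σ)) <
          Real.log (h / (Real.sqrt Real.pi * σ)) :=
        Real.log_lt_log (div_pos hstar_pos hs) ((div_lt_div_iff_of_pos_right hs).mpr H)
      nlinarith
  have first : ∀ h : ℝ, 0 < h → (0 < 1 + (kr / D) * G2 σ h ↔ hstar2 σ D kr < h) := by
    intro h hh
    rw [key, mono h hh]
  refine ⟨first, ?_, hG⟩
  intro h hh
  rw [← first h hh]
  unfold rho2
  have hk2 : 0 < kr / h ^ 2 := div_pos hkr (by positivity)
  constructor
  · intro H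
    by_contra hcon
    push_neg at hcon
    have : (1 + kr / D * G2 σ h)⁻¹ ≤ 0 := inv_nonpos.mpr hcon
    nlinarith
  · intro H
    exact mul_pos hk2 (inv_pos.mpr H)
end

section
/- Let 0 < ε < 1 and suppose h > √π·σ·exp((3 + 2π·C₂)/4), so that G²(h) > 0 and hence 0 < k_r − h²·ρ²(k_r,h). Then k_r − h²·ρ²(k_r,h) < ε·k_r if and only if h < F₂ := √π·σ·exp(2π·(D/k_r)·ε/(1−ε) + (3 + 2π·C₂)/4). -/
theorem stmt_14 (σ D kr : ℝ) (hσ : 0 < σ) (hD : 0 < D) (hkr : 0 < kr)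
    (ε : ℝ) (hε : 0 < ε) (hε1 : ε < 1) :
    ∀ h : ℝ, Real.sqrt Real.pi * σ * Real.exp ((3 + 2 * Real.pi * C2) / 4) < h →
      0 < G2 σ h ∧ 0 < kr - h ^ 2 * rho2 σ D kr h ∧
      (kr - h ^ 2 * rho2 σ D kr h < ε * kr ↔
        h < Real.sqrt Real.pi * σ *
          Real.exp (2 * Real.pi * (D / kr) * ε / (1 - ε) + (3 + 2 * Real.pi * C2) / 4)) := by
  intro h hh
  have hπ : (0:ℝ) < Real.pi := Real.pi_pos
  have hs : 0 < Real.sqrt Real.pi * σ := by positivity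
  have hh0 : 0 < h := lt_trans (by positivity) hh
  set s := Real.sqrt Real.pi * σ with hsdef
  set B : ℝ := (3 + 2 * Real.pi * C2) / 4 with hBdef
  set L : ℝ := Real.log (h / s) with hLdef
  have hhs : 0 < h / s := div_pos hh0 hs
  have hε' : 0 < 1 - ε := by linarith
  have hBL : B < L := by
    rw [hLdef, Real.lt_log_iff_exp_lt hhs, lt_div_iff₀ hs]
    linarith [hh]
  have hGeq : G2 σ h = (L - B) / (2 * Real.pi) := by
    rw [G2, hLdef, hBdef]
    field_simp
    ring
  have hG : 0 < G2 σ h := by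
    rw [hGeq]
    exact div_pos (sub_pos.2 hBL) (by positivity)
  refine ⟨hG, ?_⟩
  set G := G2 σ h with hGdef
  have hden : 0 < 1 + (kr / D) * G := by positivity
  have hkey : kr - h ^ 2 * rho2 σ D kr h = kr * ((kr / D) * G) / (1 + (kr / D) * G) := by
    rw [rho2, ← hGdef]
    field_simp
    ring
  have h2 : 0 < kr - h ^ 2 * rho2 σ D kr h := by
    rw [hkey]; positivity
  refine ⟨h2, ?_⟩
  rw [hkey]
  set c : ℝ := 2 * Real.pi * (D / kr) * ε / (1 - ε) with hcdef
  have step1 : kr * ((kr / D) * G) / (1 + (kr / D) * G) < ε * kr ↔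
      kr * ((kr / D) * G) < ε * kr * (1 + (kr / D) * G) := div_lt_iff₀ hden
  have step2 : kr * ((kr / D) * G) < ε * kr * (1 + (kr / D) * G) ↔
      (1 - ε) * ((kr / D) * G) < ε := by
    rw [show ε * kr * (1 + (kr / D) * G) = kr * (ε * (1 + (kr / D) * G)) from by ring,
      mul_lt_mul_iff_right₀ hkr]
    constructor <;> intro <;> linarith
  have step3 : (1 - ε) * ((kr / D) * G) < ε ↔ L - B < c := by
    rw [hGeq, show (1 - ε) * ((kr / D) * ((L - B) / (2 * Real.pi)))
        = (L - B) * ((1 - ε) * kr / (D * (2 * Real.pi))) from by ring,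
      ← lt_div_iff₀ (by positivity)]
    have hc : ε / ((1 - ε) * kr / (D * (2 * Real.pi))) = c := by
      rw [hcdef]
      field_simp
    rw [hc]
  have step4 : L - B < c ↔ L < c + B := sub_lt_iff_lt_add
  have step5 : L < c + B ↔ h < s * Real.exp (c + B) := by
    rw [hLdef, Real.log_lt_iff_lt_exp hhs, div_lt_iff₀ hs]
    constructor <;> intro <;> linarith
  rw [step1, step2, step3, step4, step5]
end
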